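/- Let D₂(q) = ∏_{m≥1}(1-q^{2m})²/(1-q^m)⁷ = ∑ d₂(n)q^n, let 𝒜(q) = q⁶·D₂(q)/D₂(q^{49}), and for α ≥ 1 let L_{2α}(q) = (1/D₂(q))·∑_{n≥0} d₂(7^{2α}n + λ_{2α}) q^{n+1} with λ_{2α} = (1+7^{2α+1})/8. Then U₇(𝒜 · L_{2α}) = (1/D₂(q⁷))·∑_{n≥0} d₂(7^{2α+1}n + λ_{2α+1}) q^{n+1}, where λ_{2α+1} = (1+7^{2α+1})/8. -/

import Mathlib

/-!
`U_ℓ (f · g(q^ℓ)) = U_ℓ(f) · g`, so multiplying `U₇(𝒜 L)` by `D₂(q⁷)` moves `D₂(q⁴⁹)` inside `U₇`,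
where it cancels the denominator of `𝒜`. What is left is `U₇(q⁶ · L · D₂) = U₇(q⁷ · ∑ d₂(7^{2α} n + λ) qⁿ)`,
and `U₇(q⁷ f) = q · U₇ f` turns `7^{2α} n` into `7^{2α+1} n`.
-/

open PowerSeries Finset

/-- `d` is the coefficient sequence of `D₂(q) = ∏_{m≥1} (1-q^{2m})^2 / (1-q^m)^7`. -/
def IsD2 (d : ℕ → ℤ) : Prop :=
  ∀ n : ℕ,
    PowerSeries.coeff (R := ℤ) n
        ((PowerSeries.mk d) * ∏ m ∈ Finset.range (n + 1), (1 - X ^ (m + 1)) ^ 7) =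
      PowerSeries.coeff (R := ℤ) n
        (∏ m ∈ Finset.range (n + 1), (1 - X ^ (2 * (m + 1))) ^ 2)

/-- The operator `U₇`. -/
noncomputable def Uop (ℓ : ℕ) (f : PowerSeries ℤ) : PowerSeries ℤ :=
  PowerSeries.mk fun n => PowerSeries.coeff (R := ℤ) (ℓ * n) f

/-- `expand ℓ f` is the series `f(q^ℓ)`. -/
noncomputable def expandPS (ℓ : ℕ) (f : PowerSeries ℤ) : PowerSeries ℤ :=
  PowerSeries.mk fun n => if ℓ ∣ n then PowerSeries.coeff (R := ℤ) (n / ℓ) f else 0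

theorem expandPS_eq_expand {ℓ : ℕ} (hℓ : ℓ ≠ 0) (f : PowerSeries ℤ) :
    expandPS ℓ f = expand ℓ hℓ f := by
  ext n
  rw [expandPS, coeff_mk, coeff_expand]

theorem coeff_Uop (ℓ n : ℕ) (f : PowerSeries ℤ) : coeff n (Uop ℓ f) = coeff (ℓ * n) f :=
  coeff_mk _ _

theorem X_mul_mk (e : ℕ → ℤ) :
    X * PowerSeries.mk e = PowerSeries.mk fun n => if n = 0 then 0 else e (n - 1) := by
  ext (_ | n) <;> simp [coeff_succ_X_mul]

theorem Uop_mul_expand {ℓ : ℕ} (hℓ : ℓ ≠ 0) (f g : PowerSeries ℤ) :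
    Uop ℓ (f * expand ℓ hℓ g) = Uop ℓ f * g := by
  ext n
  let scale : ℕ × ℕ ↪ ℕ × ℕ :=
    ⟨Prod.map (ℓ * ·) (ℓ * ·), (mul_right_injective₀ hℓ).prodMap (mul_right_injective₀ hℓ)⟩
  have hsub : (antidiagonal n).map scale ⊆ antidiagonal (ℓ * n) := by
    intro p hp
    obtain ⟨⟨a, b⟩, hab, rfl⟩ := mem_map.mp hp
    rw [HasAntidiagonal.mem_antidiagonal] at hab ⊢
    simp [scale, ← hab, mul_add]
  have hvanish : ∀ p ∈ antidiagonal (ℓ * n), p ∉ (antidiagonal n).map scale →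
      coeff p.1 f * coeff p.2 (expand ℓ hℓ g) = 0 := by
    rintro ⟨i, j⟩ hij hnot
    rw [HasAntidiagonal.mem_antidiagonal] at hij
    have hj : ¬ ℓ ∣ j := by
      rintro ⟨b, rfl⟩
      obtain ⟨a, rfl⟩ : ℓ ∣ i := (Nat.dvd_add_left (dvd_mul_right ℓ b)).mp (hij ▸ dvd_mul_right ℓ n)
      refine hnot (mem_map.mpr ⟨(a, b), ?_, rfl⟩)
      rw [HasAntidiagonal.mem_antidiagonal]
      exact mul_left_cancel₀ hℓ (by rw [mul_add]; exact hij)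
    rw [coeff_expand_of_not_dvd ℓ hℓ g hj, mul_zero]
  rw [coeff_Uop, coeff_mul, coeff_mul, ← sum_subset hsub hvanish, sum_map]
  simp [scale, coeff_Uop]

theorem Uop_X_pow_mul {ℓ : ℕ} (hℓ : ℓ ≠ 0) (f : PowerSeries ℤ) :
    Uop ℓ (X ^ ℓ * f) = X * Uop ℓ f := by
  rw [← expand_X ℓ hℓ, mul_comm, Uop_mul_expand, mul_comm]

theorem U7_even_step_general (d : ℕ → ℤ)
    (A : PowerSeries ℤ)
    (hA : A * expandPS 49 (PowerSeries.mk d) = X ^ 6 * PowerSeries.mk d)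
    (α : ℕ) (L : PowerSeries ℤ)
    (hL : L * PowerSeries.mk d =
      PowerSeries.mk fun n =>
        if n = 0 then 0 else d (7 ^ (2 * α) * (n - 1) + (1 + 7 ^ (2 * α + 1)) / 8)) :
    Uop 7 (A * L) * expandPS 7 (PowerSeries.mk d) =
      PowerSeries.mk fun n =>
        if n = 0 then 0 else d (7 ^ (2 * α + 1) * (n - 1) + (1 + 7 ^ (2 * α + 1)) / 8) := by
  set e : ℕ → ℤ := fun k => d (7 ^ (2 * α) * k + (1 + 7 ^ (2 * α + 1)) / 8)
  have hL_shift : L * PowerSeries.mk d = X * PowerSeries.mk e := by rw [hL, X_mul_mk]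
  have h7 : (7 : ℕ) ≠ 0 := by norm_num
  have hexpand : expand 7 h7 (expandPS 7 (PowerSeries.mk d)) = expandPS 49 (PowerSeries.mk d) := by
    rw [expandPS_eq_expand h7, expandPS_eq_expand (by norm_num), ← expand_mul]
  calc Uop 7 (A * L) * expandPS 7 (PowerSeries.mk d)
      = Uop 7 (X ^ 6 * (L * PowerSeries.mk d)) := by
        rw [← Uop_mul_expand h7, hexpand, mul_right_comm, hA, mul_assoc, mul_comm (PowerSeries.mk d)]
    _ = X * Uop 7 (PowerSeries.mk e) := by
        rw [hL_shift, ← mul_assoc, ← pow_succ, Uop_X_pow_mul h7]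
    _ = _ := by
        rw [Uop, X_mul_mk]
        simp only [coeff_mk, e, pow_succ, mul_assoc]

theorem U7_even_step (d : ℕ → ℤ) (hd : IsD2 d)
    (A : PowerSeries ℤ)
    (hA : A * expandPS 49 (PowerSeries.mk d) = X ^ 6 * PowerSeries.mk d)
    (α : ℕ) (hα : 1 ≤ α) (L : PowerSeries ℤ)
    (hL : L * PowerSeries.mk d =
      PowerSeries.mk fun n =>
        if n = 0 then 0 else d (7 ^ (2 * α) * (n - 1) + (1 + 7 ^ (2 * α + 1)) / 8)) :
    Uop 7 (A * L) * expandPS 7 (PowerSeries.mk d) =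
      PowerSeries.mk fun n =>
        if n = 0 then 0 else d (7 ^ (2 * α + 1) * (n - 1) + (1 + 7 ^ (2 * α + 1)) / 8) :=
  U7_even_step_general d A hA α L hL
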